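/- arXiv:1804.07812 — 5 statements merged into one kernel-verified Lean document; each statement's English description precedes it below -/
import Mathlib

section
/- If 1 ≤ n ≤ ⌊3(t−1)/2⌋, then γ_{t,1}(T_n) = 1; that is, a single broadcast vertex of strength t suffices to dominate T_n, and ⌊3(t−1)/2⌋ is the largest side length of an equilateral triangular matchstick graph fitting inside the hexagonal ball of radius t−1 in the triangular lattice. -/
/-- Hexagonal (triangular-lattice) graph distance on `ℤ × ℤ`,
where the lattice point `(a, b)` represents `a•α₁ + b•α₂`. -/
def hexDist (u v : ℤ × ℤ) : ℕ :=
  if 0 ≤ (u.1 - v.1) * (u.2 - v.2) then max (u.1 - v.1).natAbs (u.2 - v.2).natAbs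
  else (u.1 - v.1).natAbs + (u.2 - v.2).natAbs

/-- Vertex set of the triangular matchstick graph `T_n` (in lattice coordinates). -/
def TnSet (n : ℕ) : Set (ℤ × ℤ) := {p | 0 ≤ p.1 ∧ p.1 ≤ p.2 ∧ p.2 ≤ (n : ℤ)}

/-- Reception at `u` from a finite set `S` of broadcast vertices of strength `t`. -/
def reception (S : Finset (ℤ × ℤ)) (t : ℕ) (u : ℤ × ℤ) : ℕ :=
  ∑ v ∈ S, (t - hexDist u v)

/-- The `(t,r)` broadcast domination number of the triangular matchstick graph `T_n`. -/
noncomputable def gammaTR (t r n : ℕ) : ℕ :=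
  sInf {k : ℕ | ∃ S : Finset (ℤ × ℤ), ↑S ⊆ TnSet n ∧
    (∀ u ∈ TnSet n, r ≤ reception S t u) ∧ S.card = k}

lemma hexDist_lt_iff (u v : ℤ × ℤ) (t : ℕ) :
    hexDist u v < t ↔ (u.1 - v.1).natAbs < t ∧ (u.2 - v.2).natAbs < t ∧
      (u.1 - v.1 - (u.2 - v.2)).natAbs < t := by
  unfold hexDist
  rcases le_or_gt 0 ((u.1 - v.1) * (u.2 - v.2)) with h | h
  · rw [if_pos h]
    rcases mul_nonneg_iff.mp h with ⟨h1, h2⟩ | ⟨h1, h2⟩ <;> omega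
  · rw [if_neg (not_le.2 h)]
    rcases mul_neg_iff.mp h with ⟨h1, h2⟩ | ⟨h1, h2⟩ <;> omega

/-- If `1 ≤ n ≤ ⌊3(t−1)/2⌋` then `γ_{t,1}(T_n) = 1`; moreover `⌊3(t−1)/2⌋` is
exactly the largest side length of a triangular matchstick graph fitting
(as a translate) inside the ball of radius `t−1` of the triangular lattice. -/
theorem gammaTR_one (t : ℕ) (ht : 1 ≤ t) :
    (∀ n : ℕ, 1 ≤ n → n ≤ 3 * (t - 1) / 2 → gammaTR t 1 n = 1) ∧
    (∀ m : ℕ,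
      (∃ c : ℤ × ℤ, ∀ p ∈ TnSet m, hexDist (p.1 + c.1, p.2 + c.2) (0, 0) < t) ↔
        m ≤ 3 * (t - 1) / 2) := by
  constructor
  · intro n hn1 hn2
    have h2n : 2 * n ≤ 3 * (t - 1) := by omega
    set μ : ℕ := min n (t - 1) with hμ
    have hμn : μ ≤ n := min_le_left _ _
    have hμt : μ ≤ t - 1 := min_le_right _ _
    set c : ℤ × ℤ := ((n : ℤ) - (μ : ℤ), (μ : ℤ)) with hc
    have hcmem : c ∈ TnSet n := by
      refine ⟨?_, ?_, ?_⟩ <;> simp only [hc] <;> omega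
    have hdom : ∀ u ∈ TnSet n, 1 ≤ reception {c} t u := by
      intro u hu
      obtain ⟨h1, h2, h3⟩ := hu
      have hd : hexDist u c < t := by
        rw [hexDist_lt_iff]
        simp only [hc]
        omega
      simp only [reception, Finset.sum_singleton]
      omega
    have h1mem : 1 ∈ {k : ℕ | ∃ S : Finset (ℤ × ℤ), ↑S ⊆ TnSet n ∧
        (∀ u ∈ TnSet n, 1 ≤ reception S t u) ∧ S.card = k} := by
      refine ⟨{c}, ?_, hdom, Finset.card_singleton c⟩
      intro x hx
      simp only [Finset.coe_singleton, Set.mem_singleton_iff] at hx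
      exact hx ▸ hcmem
    have hle : gammaTR t 1 n ≤ 1 := Nat.sInf_le h1mem
    have hne : gammaTR t 1 n ≠ 0 := by
      intro h0
      have hmem := Nat.sInf_mem (⟨1, h1mem⟩ : Set.Nonempty _)
      rw [show sInf {k : ℕ | ∃ S : Finset (ℤ × ℤ), ↑S ⊆ TnSet n ∧
        (∀ u ∈ TnSet n, 1 ≤ reception S t u) ∧ S.card = k} = gammaTR t 1 n from rfl,
        h0] at hmem
      obtain ⟨S, hS, hdomS, hcard⟩ := hmem
      rw [Finset.card_eq_zero] at hcard
      subst hcard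
      have h00 : ((0 : ℤ), (0 : ℤ)) ∈ TnSet n := ⟨le_refl 0, le_refl 0, by positivity⟩
      have := hdomS (0, 0) h00
      simp [reception] at this
    omega
  · intro m
    constructor
    · rintro ⟨c, hc⟩
      have h00 := hc ((0 : ℤ), (0 : ℤ)) ⟨le_refl 0, le_refl 0, by positivity⟩
      have h0m := hc ((0 : ℤ), (m : ℤ)) ⟨le_refl 0, by positivity, le_refl _⟩
      have hmm := hc ((m : ℤ), (m : ℤ)) ⟨by positivity, le_refl _, le_refl _⟩
      rw [hexDist_lt_iff] at h00 h0m hmm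
      simp only at h00 h0m hmm
      omega
    · intro hm
      have h2m : 2 * m ≤ 3 * (t - 1) := by omega
      refine ⟨(-((m : ℤ) - (min m (t - 1) : ℕ)), -((min m (t - 1) : ℕ) : ℤ)), ?_⟩
      intro p hp
      obtain ⟨h1, h2, h3⟩ := hp
      rw [hexDist_lt_iff]
      simp only
      omega
end

section
/- If ⌊3(t−1)/2⌋ < n ≤ 2(t−1), then γ_{t,1}(T_n) = 2. -/
/-- `hexDist` is at most `s` iff both coordinate differences and their difference
have absolute value at most `s` (hexagonal ball characterization). -/
lemma hexDist_le_iff (u v : ℤ × ℤ) (s : ℕ) :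
    hexDist u v ≤ s ↔ (u.1 - v.1).natAbs ≤ s ∧ (u.2 - v.2).natAbs ≤ s ∧
      ((u.1 - v.1) - (u.2 - v.2)).natAbs ≤ s := by
  unfold hexDist
  rcases lt_trichotomy (u.1 - v.1) 0 with h|h|h <;>
  rcases lt_trichotomy (u.2 - v.2) 0 with h'|h'|h' <;>
  split_ifs with hif <;>
  (try simp only [Nat.max_le]) <;>
  first
    | omega
    | (exfalso; nlinarith)

/-- If `⌊3(t−1)/2⌋ < n ≤ 2(t−1)` then `γ_{t,1}(T_n) = 2`. -/
theorem gammaTR_two (t n : ℕ) (h1 : 3 * (t - 1) / 2 < n) (h2 : n ≤ 2 * (t - 1)) :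
    gammaTR t 1 n = 2 := by
  have ht : 2 ≤ t := by omega
  set s : ℕ := t - 1 with hs
  have hn1 : s + 1 ≤ n := by omega
  have hn2 : n ≤ 2 * s := by omega
  have h2n : 3 * s + 1 ≤ 2 * n := by omega
  set a : ℤ := (n : ℤ) - (s : ℤ) with ha
  have ha1 : 1 ≤ a := by omega
  have hc1mem : ((a, a) : ℤ × ℤ) ∈ TnSet n := by
    refine ⟨by omega, by omega, by omega⟩
  have hc2mem : (((0 : ℤ), (n : ℤ)) : ℤ × ℤ) ∈ TnSet n := by
    refine ⟨le_refl 0, by positivity, le_refl _⟩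
  have hne : ((a, a) : ℤ × ℤ) ≠ ((0 : ℤ), (n : ℤ)) := by
    intro h
    rw [Prod.mk.injEq] at h
    omega
  -- the candidate broadcast set: two centers
  set S₀ : Finset (ℤ × ℤ) := {(a, a), ((0 : ℤ), (n : ℤ))} with hS₀
  have hcard₀ : S₀.card = 2 := Finset.card_pair hne
  have hcov₀ : ∀ u ∈ TnSet n, 1 ≤ reception S₀ t u := by
    rintro ⟨x, y⟩ ⟨hx, hxy, hyn⟩
    have key : hexDist (x, y) (a, a) ≤ s ∨ hexDist (x, y) ((0 : ℤ), (n : ℤ)) ≤ s := by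
      rw [hexDist_le_iff, hexDist_le_iff]
      simp only
      omega
    have hsum : reception S₀ t (x, y) =
        (t - hexDist (x, y) (a, a)) + (t - hexDist (x, y) ((0 : ℤ), (n : ℤ))) := by
      unfold reception
      rw [hS₀, Finset.sum_pair hne]
    rw [hsum]
    omega
  have h2A : 2 ∈ {k : ℕ | ∃ S : Finset (ℤ × ℤ), ↑S ⊆ TnSet n ∧
      (∀ u ∈ TnSet n, 1 ≤ reception S t u) ∧ S.card = k} := by
    refine ⟨S₀, ?_, hcov₀, hcard₀⟩
    intro p hp
    simp only [hS₀, Finset.coe_insert, Finset.coe_singleton, Set.mem_insert_iff,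
      Set.mem_singleton_iff] at hp
    rcases hp with rfl | rfl
    · exact hc1mem
    · exact hc2mem
  have hnonempty : {k : ℕ | ∃ S : Finset (ℤ × ℤ), ↑S ⊆ TnSet n ∧
      (∀ u ∈ TnSet n, 1 ≤ reception S t u) ∧ S.card = k}.Nonempty := ⟨2, h2A⟩
  have hmem := Nat.sInf_mem hnonempty
  obtain ⟨S, hsub, hcov, hcard⟩ := hmem
  refine le_antisymm (Nat.sInf_le h2A) ?_
  unfold gammaTR
  rw [← hcard]
  by_contra hlt
  push_neg at hlt
  interval_cases hSc : S.card
  · -- an empty set gives reception 0 at the corner (0,0)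
    have h0 : ((0 : ℤ), (0 : ℤ)) ∈ TnSet n := ⟨le_refl _, le_refl _, by positivity⟩
    have := hcov _ h0
    rw [Finset.card_eq_zero] at hSc
    subst hSc
    simp [reception] at this
  · -- a single center cannot be within distance `t-1` of all three corners
    obtain ⟨v, rfl⟩ := Finset.card_eq_one.mp hSc
    have hv := hsub (Finset.mem_coe.mpr (Finset.mem_singleton_self v))
    obtain ⟨hv1, hv2, hv3⟩ := hv
    have h0 : ((0 : ℤ), (0 : ℤ)) ∈ TnSet n := ⟨le_refl _, le_refl _, by positivity⟩
    have h1' : ((0 : ℤ), (n : ℤ)) ∈ TnSet n := hc2mem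
    have h2' : (((n : ℤ)), (n : ℤ)) ∈ TnSet n := ⟨by positivity, le_refl _, le_refl _⟩
    have r0 := hcov _ h0
    have r1 := hcov _ h1'
    have r2 := hcov _ h2'
    simp only [reception, Finset.sum_singleton] at r0 r1 r2
    have d0 : hexDist ((0 : ℤ), (0 : ℤ)) v ≤ s := by omega
    have d1 : hexDist ((0 : ℤ), (n : ℤ)) v ≤ s := by omega
    have d2 : hexDist (((n : ℤ)), (n : ℤ)) v ≤ s := by omega
    rw [hexDist_le_iff] at d0 d1 d2
    simp only at d0 d1 d2
    omega
end

section
/- For every integer ℓ > 1 and odd t ≥ 2 (i.e., odd t ≥ 3), γ_{t,1}(T_{ℓ(2(t−1)−⌊t/2⌋)}) ≤ Δ_ℓ = ℓ(ℓ+1)/2. -/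
lemma hexDist_le (u v : ℤ × ℤ) (R : ℕ)
    (h1 : u.1 - v.1 ≤ (R : ℤ)) (h1' : v.1 - u.1 ≤ (R : ℤ))
    (h2 : u.2 - v.2 ≤ (R : ℤ)) (h2' : v.2 - u.2 ≤ (R : ℤ))
    (h3 : (u.1 - v.1) - (u.2 - v.2) ≤ (R : ℤ))
    (h3' : (u.2 - v.2) - (u.1 - v.1) ≤ (R : ℤ)) : hexDist u v ≤ R := by
  unfold hexDist
  split_ifs with h
  · simp only [max_le_iff]
    constructor <;> omega
  · have hneg : (u.1 - v.1) * (u.2 - v.2) < 0 := not_le.mp h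
    rcases mul_neg_iff.mp hneg with ⟨ha, hb⟩ | ⟨ha, hb⟩ <;> omega

lemma cover (s l : ℕ) (hs : 1 ≤ s) (hl : 1 ≤ l) (x y : ℤ)
    (hx : 0 ≤ x) (hxy : x ≤ y) (hy : y ≤ 3 * (s : ℤ) * l) :
    ∃ i j : ℕ, j ≤ i ∧ i < l ∧
      x - (3 * (s : ℤ) * j + s) ≤ 2 * s ∧ (3 * (s : ℤ) * j + s) - x ≤ 2 * s ∧
      y - (3 * (s : ℤ) * i + 2 * s) ≤ 2 * s ∧ (3 * (s : ℤ) * i + 2 * s) - y ≤ 2 * s ∧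
      (x - (3 * (s : ℤ) * j + s)) - (y - (3 * (s : ℤ) * i + 2 * s)) ≤ 2 * s ∧
      (y - (3 * (s : ℤ) * i + 2 * s)) - (x - (3 * (s : ℤ) * j + s)) ≤ 2 * s := by
  have hs' : (1 : ℤ) ≤ (s : ℤ) := by exact_mod_cast hs
  have hl' : (1 : ℤ) ≤ (l : ℤ) := by exact_mod_cast hl
  have hms : (0 : ℤ) < 3 * (s : ℤ) := by linarith
  have key : ∃ I J : ℤ, 0 ≤ J ∧ J ≤ I ∧ I < (l : ℤ) ∧
      x - (3 * (s : ℤ) * J + s) ≤ 2 * s ∧ (3 * (s : ℤ) * J + s) - x ≤ 2 * s ∧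
      y - (3 * (s : ℤ) * I + 2 * s) ≤ 2 * s ∧ (3 * (s : ℤ) * I + 2 * s) - y ≤ 2 * s ∧
      (x - (3 * (s : ℤ) * J + s)) - (y - (3 * (s : ℤ) * I + 2 * s)) ≤ 2 * s ∧
      (y - (3 * (s : ℤ) * I + 2 * s)) - (x - (3 * (s : ℤ) * J + s)) ≤ 2 * s := by
    obtain ⟨q, r, hq0, hr0, hrm, hqr⟩ :
        ∃ q r : ℤ, 0 ≤ q ∧ 0 ≤ r ∧ r < 3 * (s : ℤ) ∧ x = 3 * (s : ℤ) * q + r :=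
      ⟨x / (3 * (s : ℤ)), x % (3 * (s : ℤ)), Int.ediv_nonneg hx hms.le,
        Int.emod_nonneg x hms.ne', Int.emod_lt_of_pos x hms,
        (Int.mul_ediv_add_emod x (3 * (s : ℤ))).symm⟩
    obtain ⟨i0, w, hi0a, hi0l, hw0, hwm, hwdef⟩ :
        ∃ i0 w : ℤ, 0 ≤ i0 ∧ i0 < (l : ℤ) ∧ 0 ≤ w ∧ w ≤ 3 * (s : ℤ) ∧
          y = 3 * (s : ℤ) * i0 + w := by
      refine ⟨min (y / (3 * (s : ℤ))) ((l : ℤ) - 1),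
        y - 3 * (s : ℤ) * min (y / (3 * (s : ℤ))) ((l : ℤ) - 1), ?_, ?_, ?_, ?_, by ring⟩
      · exact le_min (Int.ediv_nonneg (hx.trans hxy) hms.le) (by linarith)
      · have := min_le_right (y / (3 * (s : ℤ))) ((l : ℤ) - 1)
        linarith
      · have h1 : min (y / (3 * (s : ℤ))) ((l : ℤ) - 1) ≤ y / (3 * (s : ℤ)) :=
          min_le_left _ _
        have h2 : 3 * (s : ℤ) * min (y / (3 * (s : ℤ))) ((l : ℤ) - 1) ≤
            3 * (s : ℤ) * (y / (3 * (s : ℤ))) := mul_le_mul_of_nonneg_left h1 hms.le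
        have h3 := Int.mul_ediv_add_emod y (3 * (s : ℤ))
        have h4 := Int.emod_nonneg y hms.ne'
        linarith
      · rcases le_total (y / (3 * (s : ℤ))) ((l : ℤ) - 1) with h | h
        · rw [min_eq_left h]
          have h3 := Int.mul_ediv_add_emod y (3 * (s : ℤ))
          have h4 := Int.emod_lt_of_pos y hms
          linarith
        · rw [min_eq_right h]
          linarith
    by_cases hc1 : r ≤ w + (s : ℤ)
    · by_cases hc2 : q ≤ i0
      · exact ⟨i0, q, hq0, hc2, hi0l, by linarith, by linarith, by linarith, by linarith,
          by linarith, by linarith⟩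
      · push_neg at hc2
        have h4 : i0 + 1 ≤ q := by omega
        have h5 : 3 * (s : ℤ) * (i0 + 1) ≤ 3 * (s : ℤ) * q :=
          mul_le_mul_of_nonneg_left h4 hms.le
        exact ⟨i0, i0, hi0a, le_refl _, hi0l, by linarith, by linarith, by linarith,
          by linarith, by linarith, by linarith⟩
    · push_neg at hc1
      have h6 : 3 * (s : ℤ) * q < 3 * (s : ℤ) * i0 := by linarith
      have h7 : q < i0 := lt_of_mul_lt_mul_left h6 (by linarith)
      by_cases hc3 : 2 * (s : ℤ) ≤ r
      · exact ⟨i0, q + 1, by linarith, by omega, hi0l, by linarith, by linarith, by linarith,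
          by linarith, by linarith, by linarith⟩
      · push_neg at hc3
        exact ⟨i0 - 1, q, hq0, by omega, by linarith, by linarith, by linarith, by linarith,
          by linarith, by linarith, by linarith⟩
  obtain ⟨I, J, hJ, hJI, hIl, b1, b2, b3, b4, b5, b6⟩ := key
  have hI : 0 ≤ I := hJ.trans hJI
  refine ⟨I.toNat, J.toNat, by omega, by omega, ?_, ?_, ?_, ?_, ?_, ?_⟩ <;>
    simp only [Int.toNat_of_nonneg hJ, Int.toNat_of_nonneg hI] <;> assumption

/-- For every integer `ℓ > 1` and odd `t ≥ 3`,
`γ_{t,1}(T_{ℓ(2(t−1)−⌊t/2⌋)}) ≤ Δ_ℓ = ℓ(ℓ+1)/2`. -/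
theorem gammaTR_odd_upper_bound (t l : ℕ) (hl : 1 < l) (ht : 3 ≤ t) (hodd : Odd t) :
    gammaTR t 1 (l * (2 * (t - 1) - t / 2)) ≤ l * (l + 1) / 2 := by
  obtain ⟨k, hk⟩ := hodd
  have hts : t = 2 * (t / 2) + 1 := by omega
  set s := t / 2 with hsdef
  have hs : 1 ≤ s := by omega
  have hn : l * (2 * (t - 1) - t / 2) = 3 * s * l := by
    have h' : 2 * (t - 1) - t / 2 = 3 * s := by omega
    rw [h']; ring
  rw [hn]
  classical
  set S : Finset (ℤ × ℤ) := ((Finset.range l).sigma fun i => Finset.range (i + 1)).image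
    (fun p => ((3 * (s : ℤ) * p.2 + s, 3 * (s : ℤ) * p.1 + 2 * s) : ℤ × ℤ)) with hS
  have hsub : ↑S ⊆ TnSet (3 * s * l) := by
    intro v hv
    simp only [hS, Finset.coe_image, Set.mem_image, Finset.mem_coe, Finset.mem_sigma,
      Finset.mem_range] at hv
    obtain ⟨⟨i, j⟩, ⟨hi, hj⟩, rfl⟩ := hv
    have hs' : (1 : ℤ) ≤ (s : ℤ) := by exact_mod_cast hs
    have hji : (j : ℤ) ≤ (i : ℤ) := by exact_mod_cast Nat.lt_succ_iff.mp hj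
    have hil : (i : ℤ) + 1 ≤ (l : ℤ) := by exact_mod_cast hi
    have h1 : 3 * (s : ℤ) * j ≤ 3 * (s : ℤ) * i := mul_le_mul_of_nonneg_left hji (by linarith)
    have h2 : 3 * (s : ℤ) * ((i : ℤ) + 1) ≤ 3 * (s : ℤ) * l :=
      mul_le_mul_of_nonneg_left hil (by linarith)
    refine ⟨by positivity, by dsimp only; linarith, ?_⟩
    dsimp only
    push_cast
    linarith
  have hrec : ∀ u ∈ TnSet (3 * s * l), 1 ≤ reception S t u := by
    rintro ⟨x, y⟩ ⟨hx, hxy, hy⟩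
    have hy' : y ≤ 3 * (s : ℤ) * l := by push_cast at hy; linarith
    obtain ⟨i, j, hji, hil, b1, b2, b3, b4, b5, b6⟩ :=
      cover s l hs (by omega) x y hx hxy hy'
    set v : ℤ × ℤ := (3 * (s : ℤ) * j + s, 3 * (s : ℤ) * i + 2 * s) with hv
    have hvS : v ∈ S := by
      simp only [hS, Finset.mem_image]
      exact ⟨⟨i, j⟩, by simp [Finset.mem_sigma, Finset.mem_range]; omega, rfl⟩
    have hd : hexDist (x, y) v ≤ 2 * s := by
      refine hexDist_le _ _ (2 * s) ?_ ?_ ?_ ?_ ?_ ?_ <;> dsimp only [hv] <;> push_cast <;>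
        linarith
    have h1 : 1 ≤ t - hexDist (x, y) v := by omega
    calc 1 ≤ t - hexDist (x, y) v := h1
      _ ≤ ∑ w ∈ S, (t - hexDist (x, y) w) :=
        Finset.single_le_sum (f := fun w => t - hexDist (x, y) w) (fun i _ => Nat.zero_le _) hvS
      _ = reception S t (x, y) := rfl
  have hcard : S.card ≤ l * (l + 1) / 2 := by
    refine le_trans Finset.card_image_le ?_
    rw [Finset.card_sigma]
    simp only [Finset.card_range]
    have h1 : ∑ i ∈ Finset.range (l + 1), i = (∑ i ∈ Finset.range l, (i + 1)) + 0 :=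
      Finset.sum_range_succ' id l
    have h2 : ∑ i ∈ Finset.range (l + 1), i = (l + 1) * l / 2 := by
      rw [Finset.sum_range_id]
      simp
    have h3 : (∑ i ∈ Finset.range l, (i + 1)) = (l + 1) * l / 2 := by omega
    rw [h3, Nat.mul_comm]
  refine le_trans (Nat.sInf_le ?_) hcard
  exact ⟨S, hsub, hrec, rfl⟩
end

section
/- For all n ≥ 1, γ_{3,1}(T_n) ≤ Δ_{⌊n/4 + 1⌋} = ⌊n/4+1⌋(⌊n/4+1⌋+1)/2. -/
lemma hexDist_le_two (u v : ℤ × ℤ)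
    (h1 : u.1 - v.1 ≤ 2) (h2 : v.1 - u.1 ≤ 2) (h3 : u.2 - v.2 ≤ 2) (h4 : v.2 - u.2 ≤ 2)
    (h5 : (u.1 - v.1) - (u.2 - v.2) ≤ 2) (h6 : (u.2 - v.2) - (u.1 - v.1) ≤ 2) :
    hexDist u v ≤ 2 := by
  unfold hexDist
  split
  · simp only [Nat.max_le]; omega
  · rename_i h
    rcases le_or_gt 0 (u.1 - v.1) with hax | hax <;> rcases le_or_gt 0 (u.2 - v.2) with hby | hby
    · exact absurd (mul_nonneg hax hby) h
    · omega
    · omega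
    · exact absurd (mul_pos_of_neg_of_neg hax hby).le h

lemma cover_s11 (n e1 e2 : ℕ)
    (he : (n % 4 ≤ 1 ∧ e1 = 0 ∧ e2 = 0) ∨ (2 ≤ n % 4 ∧ e1 = 1 ∧ e2 = 2))
    (a b : ℤ) (h0 : 0 ≤ a) (hab : a ≤ b) (hb : b ≤ (n : ℤ)) :
    ∃ i j : ℕ, i ≤ j ∧ j < n / 4 + 1 ∧
      a - (4 * i + e1 : ℕ) ≤ 2 ∧ ((4 * i + e1 : ℕ) : ℤ) - a ≤ 2 ∧
      b - (4 * j + e2 : ℕ) ≤ 2 ∧ ((4 * j + e2 : ℕ) : ℤ) - b ≤ 2 ∧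
      (a - (4 * i + e1 : ℕ)) - (b - (4 * j + e2 : ℕ)) ≤ 2 ∧
      (b - (4 * j + e2 : ℕ)) - (a - (4 * i + e1 : ℕ)) ≤ 2 := by
  obtain ⟨hn4, he1, he2⟩ | ⟨hn4, he1, he2⟩ := he <;>
  · obtain h1 | h1 | h1 | h1 : (a - (e1 : ℤ)) % 4 = 0 ∨ (a - (e1 : ℤ)) % 4 = 1 ∨
        (a - (e1 : ℤ)) % 4 = 2 ∨ (a - (e1 : ℤ)) % 4 = 3 := by omega
    all_goals obtain h2 | h2 | h2 | h2 : (b - (e2 : ℤ)) % 4 = 0 ∨ (b - (e2 : ℤ)) % 4 = 1 ∨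
        (b - (e2 : ℤ)) % 4 = 2 ∨ (b - (e2 : ℤ)) % 4 = 3 := by omega
    all_goals first
      | (refine ⟨((a - (e1 : ℤ)) / 4).toNat, ((b - (e2 : ℤ)) / 4).toNat, ?_⟩; omega)
      | (refine ⟨((a - (e1 : ℤ)) / 4).toNat, ((b - (e2 : ℤ)) / 4 + 1).toNat, ?_⟩; omega)
      | (refine ⟨((a - (e1 : ℤ)) / 4 + 1).toNat, ((b - (e2 : ℤ)) / 4 + 1).toNat, ?_⟩; omega)
      | (refine ⟨((a - (e1 : ℤ)) / 4 + 1).toNat, ((b - (e2 : ℤ)) / 4).toNat, ?_⟩; omega)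

lemma sum_range_succ_eq (m : ℕ) : ∑ j ∈ Finset.range m, (j + 1) = m * (m + 1) / 2 := by
  induction m with
  | zero => simp
  | succ k ih =>
    rw [Finset.sum_range_succ, ih]
    have e1 : (k + 1) * (k + 1 + 1) = k * (k + 1) + 2 * (k + 1) := by ring
    have e2 : k * (k + 1) % 2 = 0 := Nat.even_iff.mp (Nat.even_mul_succ_self k)
    omega

lemma exists_good_set (n e1 e2 : ℕ)
    (he : (n % 4 ≤ 1 ∧ e1 = 0 ∧ e2 = 0) ∨ (2 ≤ n % 4 ∧ e1 = 1 ∧ e2 = 2)) :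
    ∃ S : Finset (ℤ × ℤ), ↑S ⊆ TnSet n ∧
      (∀ u ∈ TnSet n, 1 ≤ reception S 3 u) ∧
      S.card ≤ (n / 4 + 1) * (n / 4 + 1 + 1) / 2 := by
  classical
  set m := n / 4 + 1 with hm
  refine ⟨(Finset.range m).biUnion (fun j => (Finset.range (j + 1)).image
      (fun i => (((4 * i + e1 : ℕ) : ℤ), ((4 * j + e2 : ℕ) : ℤ)))), ?_, ?_, ?_⟩
  · intro v hv
    simp only [Finset.mem_coe, Finset.mem_biUnion, Finset.mem_image, Finset.mem_range] at hv
    obtain ⟨j, hj, i, hi, rfl⟩ := hv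
    have hnm : 4 * (m - 1) + e2 ≤ n := by
      rcases he with ⟨h, rfl, rfl⟩ | ⟨h, rfl, rfl⟩ <;> omega
    refine ⟨by positivity, ?_, ?_⟩
    · show ((4 * i + e1 : ℕ) : ℤ) ≤ ((4 * j + e2 : ℕ) : ℤ)
      have h12 : e1 ≤ e2 := by rcases he with ⟨h, rfl, rfl⟩ | ⟨h, rfl, rfl⟩ <;> omega
      have : 4 * i + e1 ≤ 4 * j + e2 := by omega
      exact_mod_cast this
    · show ((4 * j + e2 : ℕ) : ℤ) ≤ (n : ℤ)
      have : 4 * j + e2 ≤ n := by omega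
      exact_mod_cast this
  · rintro ⟨a, b⟩ ⟨h0, hab, hb⟩
    obtain ⟨i, j, hij, hjm, c1, c2, c3, c4, c5, c6⟩ := cover_s11 n e1 e2 he a b h0 hab hb
    have hmem : (((4 * i + e1 : ℕ) : ℤ), ((4 * j + e2 : ℕ) : ℤ)) ∈
        (Finset.range m).biUnion (fun j => (Finset.range (j + 1)).image
          (fun i => (((4 * i + e1 : ℕ) : ℤ), ((4 * j + e2 : ℕ) : ℤ)))) := by
      refine Finset.mem_biUnion.2 ⟨j, Finset.mem_range.2 hjm, ?_⟩
      exact Finset.mem_image.2 ⟨i, Finset.mem_range.2 (by omega), rfl⟩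
    have hd : hexDist (a, b) (((4 * i + e1 : ℕ) : ℤ), ((4 * j + e2 : ℕ) : ℤ)) ≤ 2 :=
      hexDist_le_two _ _ c1 c2 c3 c4 c5 c6
    have key : 3 - hexDist (a, b) (((4 * i + e1 : ℕ) : ℤ), ((4 * j + e2 : ℕ) : ℤ)) ≤
        ∑ v ∈ (Finset.range m).biUnion (fun j => (Finset.range (j + 1)).image
          (fun i => (((4 * i + e1 : ℕ) : ℤ), ((4 * j + e2 : ℕ) : ℤ)))),
          (3 - hexDist (a, b) v) :=
      Finset.single_le_sum (f := fun v => 3 - hexDist (a, b) v)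
        (fun i _ => Nat.zero_le _) hmem
    unfold reception
    omega
  · calc ((Finset.range m).biUnion (fun j => (Finset.range (j + 1)).image
          (fun i => (((4 * i + e1 : ℕ) : ℤ), ((4 * j + e2 : ℕ) : ℤ))))).card
        ≤ ∑ j ∈ Finset.range m, ((Finset.range (j + 1)).image
          (fun i => (((4 * i + e1 : ℕ) : ℤ), ((4 * j + e2 : ℕ) : ℤ)))).card :=
          Finset.card_biUnion_le
      _ ≤ ∑ j ∈ Finset.range m, (j + 1) := by
          refine Finset.sum_le_sum fun j _ => ?_
          simpa using Finset.card_image_le (s := Finset.range (j + 1))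
      _ = m * (m + 1) / 2 := sum_range_succ_eq m

/-- For all `n ≥ 1`, `γ_{3,1}(T_n) ≤ Δ_{⌊n/4 + 1⌋}`. -/
theorem gammaTR_31_upper_bound (n : ℕ) (hn : 1 ≤ n) :
    gammaTR 3 1 n ≤ (n / 4 + 1) * (n / 4 + 1 + 1) / 2 := by
  rcases le_or_gt (n % 4) 1 with h | h
  · obtain ⟨S, h1, h2, h3⟩ := exists_good_set n 0 0 (Or.inl ⟨h, rfl, rfl⟩)
    exact le_trans (Nat.sInf_le ⟨S, h1, h2, rfl⟩) h3
  · obtain ⟨S, h1, h2, h3⟩ := exists_good_set n 1 2 (Or.inr ⟨h, rfl, rfl⟩)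
    exact le_trans (Nat.sInf_le ⟨S, h1, h2, rfl⟩) h3
end

section
/- Mirror pattern: for t ≥ r ≥ 1, placing broadcast vertices at all points [tx + (2t−r)y]α₁ + [(2t−r)x + (t−r)y]α₂ for x, y ∈ ℤ also yields an efficient (t,r) broadcast dominating set of the infinite triangular grid; this pattern is the reflection of the pattern {[(2t−r)x+(t−r)y]α₁ + [tx+(2t−r)y]α₂} across the line through the origin and α₁ + α₂. -/
/-- A finite box of lattice points containing every vertex within hex distance
`t` of `u`. -/
noncomputable def ballBox (t : ℕ) (u : ℤ × ℤ) : Finset (ℤ × ℤ) :=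
  Finset.Icc (u.1 - t, u.2 - t) (u.1 + t, u.2 + t)

open Classical in
/-- Reception at `u` from a (possibly infinite) set `S` of broadcast vertices of
strength `t`: the sum of `t − d(u,v)` over all `v ∈ S` with `d(u,v) < t`
(vertices with `d(u,v) ≥ t` contribute `0` by truncated subtraction, and all
contributing vertices lie in the box `ballBox t u`). -/
noncomputable def receptionSet (S : Set (ℤ × ℤ)) (t : ℕ) (u : ℤ × ℤ) : ℕ :=
  ∑ v ∈ ballBox t u, if v ∈ S then t - hexDist u v else 0

/-- The broadcast pattern of Theorem 4.2: dominators at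
`[(2t−r)x + (t−r)y]α₁ + [tx + (2t−r)y]α₂` for `x, y ∈ ℤ`. -/
def pattern (t r : ℕ) : Set (ℤ × ℤ) :=
  {p | ∃ x y : ℤ, p = ((2 * (t : ℤ) - r) * x + ((t : ℤ) - r) * y,
                       (t : ℤ) * x + (2 * (t : ℤ) - r) * y)}

/-- The mirror broadcast pattern: dominators at
`[tx + (2t−r)y]α₁ + [(2t−r)x + (t−r)y]α₂` for `x, y ∈ ℤ`. -/
def patternMirror (t r : ℕ) : Set (ℤ × ℤ) :=
  {p | ∃ x y : ℤ, p = ((t : ℤ) * x + (2 * (t : ℤ) - r) * y,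
                       (2 * (t : ℤ) - r) * x + ((t : ℤ) - r) * y)}

/-- `S` is an efficient `(t,r)` broadcast dominating set of `T_∞`: every vertex
has reception at least `r`; vertices at distance `≥ t−r` from every dominator
have reception exactly `r`; and a vertex within distance `< t−r` of some
dominator is within that distance of exactly one dominator `v` and has
reception exactly `t − d(u,v)`. -/
def IsEfficientBroadcast (S : Set (ℤ × ℤ)) (t r : ℕ) : Prop :=
  (∀ u : ℤ × ℤ, r ≤ receptionSet S t u) ∧
  (∀ u : ℤ × ℤ, (∀ v ∈ S, t - r ≤ hexDist u v) → receptionSet S t u = r) ∧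
  (∀ u v : ℤ × ℤ, v ∈ S → hexDist u v < t - r →
    receptionSet S t u = t - hexDist u v ∧
    ∀ w ∈ S, hexDist u w < t - r → w = v)

/-!
The dominators of `pattern t r` form the lattice spanned by `e₁ = (2t−r, t)` and
`e₂ = (t−r, 2t−r)`, of index `3t² − 3tr + r²`. Distinct lattice points are at hex distance at
least `2t − r` apart, so a vertex within `t − r` of a dominator `v` is at distance at least `t`
from every other dominator and hears `v` alone. Every vertex lies in a translate of the
fundamental parallelogram of the lattice, only the four corners of that parallelogram reach it,
and a case analysis in linear arithmetic shows that the corners' signals add up to exactly `r`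
when all four are at distance at least `t − r`. The mirror pattern is the image of `pattern t r`
under the coordinate swap, which is an automorphism of the grid.
-/

def hexNorm (w : ℤ × ℤ) : ℕ := max (max w.1.natAbs w.2.natAbs) (w.1 - w.2).natAbs

theorem hexDist_eq_hexNorm (u v : ℤ × ℤ) : hexDist u v = hexNorm (u - v) := by
  simp only [hexDist, hexNorm, Prod.fst_sub, Prod.snd_sub]
  split_ifs with h
  · rcases mul_nonneg_iff.mp h with ⟨_, _⟩ | ⟨_, _⟩ <;> omega
  · rcases mul_neg_iff.mp (not_le.mp h) with ⟨_, _⟩ | ⟨_, _⟩ <;> omega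

theorem hexNorm_le_iff (w : ℤ × ℤ) (n : ℕ) :
    hexNorm w ≤ n ↔ w.1.natAbs ≤ n ∧ w.2.natAbs ≤ n ∧ (w.1 - w.2).natAbs ≤ n := by
  simp only [hexNorm, sup_le_iff, and_assoc]

theorem hexNorm_add_le (v w : ℤ × ℤ) : hexNorm (v + w) ≤ hexNorm v + hexNorm w := by
  obtain ⟨hv₁, hv₂, hv₃⟩ := (hexNorm_le_iff v _).1 le_rfl
  obtain ⟨hw₁, hw₂, hw₃⟩ := (hexNorm_le_iff w _).1 le_rfl
  simp only [hexNorm_le_iff, Prod.fst_add, Prod.snd_add]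
  refine ⟨?_, ?_, ?_⟩ <;> omega

theorem hexNorm_neg (w : ℤ × ℤ) : hexNorm (-w) = hexNorm w := by
  simp only [hexNorm, Prod.fst_neg, Prod.snd_neg]; omega

theorem hexNorm_swap (w : ℤ × ℤ) : hexNorm w.swap = hexNorm w := by
  simp only [hexNorm, Prod.fst_swap, Prod.snd_swap]; omega

theorem hexNorm_eq_max_of_nonneg {w : ℤ × ℤ} (h₁ : 0 ≤ w.1) (h₂ : 0 ≤ w.2) :
    (hexNorm w : ℤ) = max w.1 w.2 := by
  simp only [hexNorm, Nat.cast_max]; omega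

theorem hexNorm_eq_max_of_nonpos {w : ℤ × ℤ} (h₁ : w.1 ≤ 0) (h₂ : w.2 ≤ 0) :
    (hexNorm w : ℤ) = max (-w.1) (-w.2) := by
  simp only [hexNorm, Nat.cast_max]; omega

theorem hexNorm_eq_max_of_le {w : ℤ × ℤ} (h : w.1 ≤ w.2) :
    (hexNorm w : ℤ) = max (max (-w.1) w.2) (w.2 - w.1) := by
  simp only [hexNorm, Nat.cast_max]; omega

theorem hexNorm_eq_max_of_ge {w : ℤ × ℤ} (h : w.2 ≤ w.1) :
    (hexNorm w : ℤ) = max (max w.1 (-w.2)) (w.1 - w.2) := by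
  simp only [hexNorm, Nat.cast_max]; omega

theorem hexDist_le_add (u v w : ℤ × ℤ) : hexDist v w ≤ hexDist u v + hexDist u w := by
  rw [hexDist_eq_hexNorm, hexDist_eq_hexNorm, hexDist_eq_hexNorm, ← hexNorm_neg (u - v)]
  simpa using hexNorm_add_le (-(u - v)) (u - w)

theorem hexDist_swap (u v : ℤ × ℤ) : hexDist u.swap v.swap = hexDist u v := by
  rw [hexDist_eq_hexNorm, hexDist_eq_hexNorm, ← Prod.swap_sub, hexNorm_swap]

theorem mem_ballBox_of_hexDist_lt {t : ℕ} {u v : ℤ × ℤ} (h : hexDist u v < t) :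
    v ∈ ballBox t u := by
  rw [hexDist_eq_hexNorm, hexNorm] at h
  simp only [ballBox, Finset.mem_Icc, Prod.le_def, Prod.fst_sub, Prod.snd_sub] at h ⊢
  omega

theorem receptionSet_eq_sum {S : Set (ℤ × ℤ)} {t : ℕ} {u : ℤ × ℤ} (F : Finset (ℤ × ℤ))
    (hFS : ∀ v ∈ F, v ∈ S) (hF : ∀ v ∈ S, hexDist u v < t → v ∈ F) :
    receptionSet S t u = ∑ v ∈ F, (t - hexDist u v) := by
  classical
  have hsupp : ∀ v, (if v ∈ S then t - hexDist u v else 0) ≠ 0 → v ∈ ballBox t u ∩ F := by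
    intro v hv
    split_ifs at hv with hS
    · have hlt : hexDist u v < t := by omega
      exact Finset.mem_inter.2 ⟨mem_ballBox_of_hexDist_lt hlt, hF v hS hlt⟩
    · exact absurd rfl hv
  unfold receptionSet
  calc _ = ∑ v ∈ ballBox t u ∩ F, if v ∈ S then t - hexDist u v else 0 :=
        (Finset.sum_subset Finset.inter_subset_left fun v _ hv =>
          not_ne_iff.1 (mt (hsupp v) hv)).symm
    _ = ∑ v ∈ F, if v ∈ S then t - hexDist u v else 0 :=
        Finset.sum_subset Finset.inter_subset_right fun v _ hv => not_ne_iff.1 (mt (hsupp v) hv)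
    _ = _ := Finset.sum_congr rfl fun v hv => if_pos (hFS v hv)

theorem receptionSet_image {S : Set (ℤ × ℤ)} {t : ℕ} (e : (ℤ × ℤ) ≃ (ℤ × ℤ))
    (he : ∀ u v, hexDist (e u) (e v) = hexDist u v) (u : ℤ × ℤ) :
    receptionSet (e '' S) t (e u) = receptionSet S t u := by
  classical
  set F := (ballBox t u).filter (· ∈ S)
  rw [receptionSet_eq_sum (F.map e.toEmbedding), Finset.sum_map, receptionSet_eq_sum F]
  · simp [he]
  · intro v hv
    exact (Finset.mem_filter.1 hv).2
  · intro v hv hlt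
    exact Finset.mem_filter.2 ⟨mem_ballBox_of_hexDist_lt hlt, hv⟩
  · intro v hv
    obtain ⟨w, hw, rfl⟩ := Finset.mem_map.1 hv
    exact ⟨w, (Finset.mem_filter.1 hw).2, rfl⟩
  · rintro _ ⟨v, hv, rfl⟩ hlt
    rw [he] at hlt
    exact Finset.mem_map_of_mem _ (Finset.mem_filter.2 ⟨mem_ballBox_of_hexDist_lt hlt, hv⟩)

theorem IsEfficientBroadcast.image {S : Set (ℤ × ℤ)} {t r : ℕ}
    (h : IsEfficientBroadcast S t r) (e : (ℤ × ℤ) ≃ (ℤ × ℤ))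
    (he : ∀ u v, hexDist (e u) (e v) = hexDist u v) : IsEfficientBroadcast (e '' S) t r := by
  refine ⟨fun u => ?_, fun u hu => ?_, fun u v hv hlt => ?_⟩ <;> obtain ⟨u, rfl⟩ := e.surjective u
  · rw [receptionSet_image e he]
    exact h.1 u
  · rw [receptionSet_image e he]
    exact h.2.1 u fun v hv => he u v ▸ hu (e v) ⟨v, hv, rfl⟩
  · obtain ⟨v, hv, rfl⟩ := hv
    rw [he] at hlt ⊢
    obtain ⟨hrec, huniq⟩ := h.2.2 u v hv hlt
    refine ⟨by rw [receptionSet_image e he, hrec], ?_⟩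
    rintro _ ⟨w, hw, rfl⟩ hw'
    rw [huniq w hw (he u w ▸ hw')]

theorem abs_mul_add_mul_le {a b x y n : ℤ} (ha : 0 ≤ a) (hb : 0 ≤ b) (hx : |x| ≤ n)
    (hy : |y| ≤ n) : |a * x + b * y| ≤ (a + b) * n :=
  calc |a * x + b * y| ≤ a * |x| + b * |y| := by
        simpa only [abs_mul, abs_of_nonneg ha, abs_of_nonneg hb] using abs_add_le (a * x) (b * y)
    _ ≤ (a + b) * n := by
        nlinarith [mul_le_mul_of_nonneg_left hx ha, mul_le_mul_of_nonneg_left hy hb]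

theorem eq_zero_or_eq_one_of_mul_bounds {D k : ℤ} (hD : 0 < D) (h₁ : -D < D * k)
    (h₂ : D * k < 2 * D) : k = 0 ∨ k = 1 := by
  have : -1 < k := lt_of_mul_lt_mul_left (by linarith) hD.le
  have : k < 2 := lt_of_mul_lt_mul_left (by linarith) hD.le
  omega

def patternPt (t r : ℕ) (x y : ℤ) : ℤ × ℤ :=
  ((2 * (t : ℤ) - r) * x + ((t : ℤ) - r) * y, (t : ℤ) * x + (2 * (t : ℤ) - r) * y)

def patternDet (t r : ℕ) : ℤ := 3 * (t : ℤ) ^ 2 - 3 * t * r + (r : ℤ) ^ 2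

/- `coordX` and `coordY` are `patternDet t r` times the coordinates in the lattice basis
`patternPt t r 1 0`, `patternPt t r 0 1`; `InCell` is the half-open fundamental parallelogram. -/
def coordX (t r : ℕ) (w : ℤ × ℤ) : ℤ := (2 * (t : ℤ) - r) * w.1 - ((t : ℤ) - r) * w.2

def coordY (t r : ℕ) (w : ℤ × ℤ) : ℤ := (2 * (t : ℤ) - r) * w.2 - (t : ℤ) * w.1

def InCell (t r : ℕ) (w : ℤ × ℤ) : Prop :=
  0 ≤ coordX t r w ∧ coordX t r w < patternDet t r ∧
    0 ≤ coordY t r w ∧ coordY t r w < patternDet t r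

section Pattern

variable {t r : ℕ}

theorem mem_pattern {v : ℤ × ℤ} : v ∈ pattern t r ↔ ∃ x y, v = patternPt t r x y :=
  Iff.rfl

theorem patternPt_mem_pattern (x y : ℤ) : patternPt t r x y ∈ pattern t r :=
  ⟨x, y, rfl⟩

theorem patternDet_pos (ht : 0 < t) (hrt : r ≤ t) : 0 < patternDet t r := by
  unfold patternDet
  have : (r : ℤ) ≤ t := by exact_mod_cast hrt
  have : (0 : ℤ) < t := by exact_mod_cast ht
  nlinarith

theorem patternPt_add (x y x' y' : ℤ) :
    patternPt t r (x + x') (y + y') = patternPt t r x y + patternPt t r x' y' := by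
  simp only [patternPt, Prod.mk_add_mk]; ring_nf

theorem patternPt_sub (x y x' y' : ℤ) :
    patternPt t r (x - x') (y - y') = patternPt t r x y - patternPt t r x' y' := by
  simp only [patternPt, Prod.mk_sub_mk]; ring_nf

theorem coordX_sub (v w : ℤ × ℤ) : coordX t r (v - w) = coordX t r v - coordX t r w := by
  simp only [coordX, Prod.fst_sub, Prod.snd_sub]; ring

theorem coordY_sub (v w : ℤ × ℤ) : coordY t r (v - w) = coordY t r v - coordY t r w := by
  simp only [coordY, Prod.fst_sub, Prod.snd_sub]; ring

theorem coordX_patternPt (x y : ℤ) : coordX t r (patternPt t r x y) = patternDet t r * x := by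
  simp only [coordX, patternPt, patternDet]; ring

theorem coordY_patternPt (x y : ℤ) : coordY t r (patternPt t r x y) = patternDet t r * y := by
  simp only [coordY, patternPt, patternDet]; ring

theorem patternPt_inj (hD : patternDet t r ≠ 0) {x y x' y' : ℤ} :
    patternPt t r x y = patternPt t r x' y' ↔ x = x' ∧ y = y' := by
  refine ⟨fun h => ⟨mul_left_cancel₀ hD ?_, mul_left_cancel₀ hD ?_⟩,
    fun ⟨hx, hy⟩ => hx ▸ hy ▸ rfl⟩
  · rw [← coordX_patternPt, ← coordX_patternPt, h]
  · rw [← coordY_patternPt x, ← coordY_patternPt x', h]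

theorem le_hexNorm_patternPt (hrt : r ≤ t) {x y : ℤ} (hxy : (x, y) ≠ (0, 0)) :
    2 * t - r ≤ hexNorm (patternPt t r x y) := by
  have hRT : (r : ℤ) ≤ t := by exact_mod_cast hrt
  set N : ℤ := 2 * t - r with hN
  set w := patternPt t r x y with hw
  suffices h : (N ≤ w.1 ∨ N ≤ -w.1) ∨ (N ≤ w.2 ∨ N ≤ -w.2) ∨ (N ≤ w.1 - w.2 ∨ N ≤ w.2 - w.1) by
    simp only [hexNorm]; omega
  simp only [hw, patternPt]
  rcases lt_trichotomy x 0 with hx | rfl | hx <;> rcases lt_trichotomy y 0 with hy | rfl | hy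
  · exact Or.inl (Or.inr (by nlinarith))
  · exact Or.inl (Or.inr (by nlinarith))
  · exact Or.inr (Or.inr (Or.inr (by nlinarith)))
  · exact Or.inr (Or.inl (Or.inr (by nlinarith)))
  · exact absurd rfl hxy
  · exact Or.inr (Or.inl (Or.inl (by nlinarith)))
  · exact Or.inr (Or.inr (Or.inl (by nlinarith)))
  · exact Or.inl (Or.inl (by nlinarith))
  · exact Or.inl (Or.inl (by nlinarith))

theorem le_hexDist_of_mem_pattern (hrt : r ≤ t) {v w : ℤ × ℤ} (hv : v ∈ pattern t r)
    (hw : w ∈ pattern t r) (hvw : v ≠ w) : 2 * t - r ≤ hexDist v w := by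
  obtain ⟨x, y, rfl⟩ := mem_pattern.1 hv
  obtain ⟨x', y', rfl⟩ := mem_pattern.1 hw
  rw [hexDist_eq_hexNorm, ← patternPt_sub]
  refine le_hexNorm_patternPt hrt fun h => hvw ?_
  simp only [Prod.mk.injEq, sub_eq_zero] at h
  rw [h.1, h.2]

theorem receptionSet_pattern_of_hexDist_lt (hrt : r ≤ t) {u v : ℤ × ℤ} (hv : v ∈ pattern t r)
    (huv : hexDist u v < t - r) :
    receptionSet (pattern t r) t u = t - hexDist u v ∧
      ∀ w ∈ pattern t r, hexDist u w < t - r → w = v := by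
  have hunique : ∀ w ∈ pattern t r, hexDist u w < t → w = v := fun w hw huw => by
    by_contra hwv
    have := le_hexDist_of_mem_pattern hrt hv hw (Ne.symm hwv)
    have := hexDist_le_add u v w
    omega
  refine ⟨?_, fun w hw huw => hunique w hw (by omega)⟩
  rw [receptionSet_eq_sum {v} (by simpa using hv) fun w hw huw => by simpa using hunique w hw huw,
    Finset.sum_singleton]

theorem exists_inCell (hD : 0 < patternDet t r) (u : ℤ × ℤ) :
    ∃ x y, InCell t r (u - patternPt t r x y) := by
  refine ⟨coordX t r u / patternDet t r, coordY t r u / patternDet t r, ?_⟩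
  simp only [InCell, coordX_sub, coordY_sub, coordX_patternPt, coordY_patternPt, ← Int.emod_def]
  exact ⟨Int.emod_nonneg _ hD.ne', Int.emod_lt_of_pos _ hD,
    Int.emod_nonneg _ hD.ne', Int.emod_lt_of_pos _ hD⟩

theorem InCell.bounds (ht : 0 < t) (hrt : r ≤ t) {w : ℤ × ℤ} (hw : InCell t r w) :
    0 ≤ w.1 ∧ w.1 < 3 * (t : ℤ) - 2 * r ∧ 0 ≤ w.2 ∧ w.2 < 3 * (t : ℤ) - r ∧
      -(t : ℤ) < w.1 - w.2 ∧ w.1 - w.2 ≤ (t : ℤ) - r := by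
  obtain ⟨hX₀, hX₁, hY₀, hY₁⟩ := hw
  have hRT : (r : ℤ) ≤ t := by exact_mod_cast hrt
  have hT : (0 : ℤ) < t := by exact_mod_cast ht
  have e₁ : patternDet t r * w.1 =
      (2 * (t : ℤ) - r) * coordX t r w + ((t : ℤ) - r) * coordY t r w := by
    simp only [patternDet, coordX, coordY]; ring
  have e₂ : patternDet t r * w.2 = (t : ℤ) * coordX t r w + (2 * (t : ℤ) - r) * coordY t r w := by
    simp only [patternDet, coordX, coordY]; ring
  have hX : 0 ≤ patternDet t r - 1 - coordX t r w := by omega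
  have hY : 0 ≤ patternDet t r - 1 - coordY t r w := by omega
  refine ⟨?_, ?_, ?_, ?_, ?_, ?_⟩
  · nlinarith
  · nlinarith [mul_nonneg (by omega : (0 : ℤ) ≤ 2 * t - r) hX,
      mul_nonneg (by omega : (0 : ℤ) ≤ t - r) hY]
  · nlinarith
  · nlinarith [mul_nonneg hT.le hX, mul_nonneg (by omega : (0 : ℤ) ≤ 2 * t - r) hY]
  · nlinarith [mul_nonneg hT.le hY, mul_nonneg (by omega : (0 : ℤ) ≤ t - r) hX₀]
  · nlinarith [mul_nonneg hT.le hY₀, mul_nonneg (by omega : (0 : ℤ) ≤ t - r) hX]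

theorem abs_coord_lt_of_hexNorm_lt (hrt : r ≤ t) {w : ℤ × ℤ} (hw : hexNorm w < t) :
    |coordX t r w| < patternDet t r ∧ |coordY t r w| < patternDet t r := by
  have hRT : (r : ℤ) ≤ t := by exact_mod_cast hrt
  obtain ⟨h₁, h₂, h₃⟩ := (hexNorm_le_iff w (t - 1)).1 (by omega)
  have hn : ∀ z : ℤ, z.natAbs ≤ t - 1 → |z| ≤ (t : ℤ) - 1 := fun z hz => by
    rw [← Int.natCast_natAbs]; omega
  have hdet : (2 * (t : ℤ) - r) * (t - 1) < patternDet t r := by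
    unfold patternDet; nlinarith
  constructor
  · calc |coordX t r w| = |(t : ℤ) * w.1 + ((t : ℤ) - r) * (w.1 - w.2)| := by
          simp only [coordX]; ring_nf
      _ ≤ ((t : ℤ) + (t - r)) * (t - 1) :=
          abs_mul_add_mul_le (by omega) (by omega) (hn _ h₁) (hn _ h₃)
      _ < _ := by linarith
  · calc |coordY t r w| = |(t : ℤ) * (w.2 - w.1) + ((t : ℤ) - r) * w.2| := by
          simp only [coordY]; ring_nf
      _ ≤ ((t : ℤ) + (t - r)) * (t - 1) :=
          abs_mul_add_mul_le (by omega) (by omega) (abs_sub_comm w.2 w.1 ▸ hn _ h₃) (hn _ h₂)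
      _ < _ := by linarith

theorem sub_mem_of_inCell_of_hexDist_lt (hrt : r ≤ t) {u : ℤ × ℤ} {x y x' y' : ℤ}
    (hc : InCell t r (u - patternPt t r x y)) (h : hexDist u (patternPt t r x' y') < t) :
    x' - x ∈ ({0, 1} : Finset ℤ) ∧ y' - y ∈ ({0, 1} : Finset ℤ) := by
  have hD := patternDet_pos (by omega) hrt
  rw [hexDist_eq_hexNorm] at h
  obtain ⟨hX, hY⟩ := abs_coord_lt_of_hexNorm_lt hrt h
  obtain ⟨hX₀, hX₁, hY₀, hY₁⟩ := hc
  rw [abs_lt] at hX hY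
  have eX : patternDet t r * (x' - x) =
      coordX t r (u - patternPt t r x y) - coordX t r (u - patternPt t r x' y') := by
    simp only [coordX_sub, coordX_patternPt]; ring
  have eY : patternDet t r * (y' - y) =
      coordY t r (u - patternPt t r x y) - coordY t r (u - patternPt t r x' y') := by
    simp only [coordY_sub, coordY_patternPt]; ring
  simp only [Finset.mem_insert, Finset.mem_singleton]
  exact ⟨eq_zero_or_eq_one_of_mul_bounds hD (by linarith) (by linarith),
    eq_zero_or_eq_one_of_mul_bounds hD (by linarith) (by linarith)⟩

set_option maxHeartbeats 1000000 in
theorem sum_corner_signals_eq (ht : 0 < t) (hrt : r ≤ t) {w : ℤ × ℤ} (hw : InCell t r w)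
    (hfar : ∀ i ∈ ({0, 1} : Finset ℤ), ∀ j ∈ ({0, 1} : Finset ℤ),
      t - r ≤ hexNorm (w - patternPt t r i j)) :
    ∑ i ∈ ({0, 1} : Finset ℤ), ∑ j ∈ ({0, 1} : Finset ℤ),
      (t - hexNorm (w - patternPt t r i j)) = r := by
  have hbd := hw.bounds ht hrt
  -- On the cell each corner sees a fixed sign pattern, so its `hexNorm` is a maximum of
  -- linear forms and the identity becomes linear arithmetic.
  simp only [Finset.mem_insert, Finset.mem_singleton, forall_eq_or_imp, forall_eq] at hfar
  rw [Finset.sum_pair zero_ne_one, Finset.sum_pair zero_ne_one, Finset.sum_pair zero_ne_one]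
  have c₀₀ := hexNorm_eq_max_of_nonneg (w := w - patternPt t r 0 0)
  have c₁₀ := hexNorm_eq_max_of_le (w := w - patternPt t r 1 0)
  have c₀₁ := hexNorm_eq_max_of_ge (w := w - patternPt t r 0 1)
  have c₁₁ := hexNorm_eq_max_of_nonpos (w := w - patternPt t r 1 1)
  clear hw
  obtain ⟨s, rfl⟩ := Nat.exists_eq_add_of_le hrt
  simp only [patternPt, Prod.fst_sub, Prod.snd_sub, Nat.add_sub_cancel_left, Nat.cast_add,
    mul_zero, mul_one, add_zero, zero_add, sub_zero] at *
  specialize c₀₀ (by omega) (by omega)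
  specialize c₁₀ (by omega)
  specialize c₀₁ (by omega)
  specialize c₁₁ (by omega) (by omega)
  omega

theorem receptionSet_pattern_of_le_hexDist (ht : 0 < t) (hrt : r ≤ t) {u : ℤ × ℤ}
    (hfar : ∀ v ∈ pattern t r, t - r ≤ hexDist u v) : receptionSet (pattern t r) t u = r := by
  classical
  have hD := patternDet_pos ht hrt
  obtain ⟨x, y, hc⟩ := exists_inCell hD u
  have hdist : ∀ i j, hexDist u (patternPt t r (x + i) (y + j)) =
      hexNorm (u - patternPt t r x y - patternPt t r i j) := fun i j => by
    rw [hexDist_eq_hexNorm, patternPt_add, sub_add_eq_sub_sub]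
  let corners := (({0, 1} : Finset ℤ) ×ˢ ({0, 1} : Finset ℤ)).image
    fun ij => patternPt t r (x + ij.1) (y + ij.2)
  have hsub : ∀ v ∈ corners, v ∈ pattern t r := fun v hv => by
    obtain ⟨_, _, rfl⟩ := Finset.mem_image.1 hv
    exact patternPt_mem_pattern _ _
  have hnear : ∀ v ∈ pattern t r, hexDist u v < t → v ∈ corners := fun v hv huv => by
    obtain ⟨x', y', rfl⟩ := mem_pattern.1 hv
    obtain ⟨hx, hy⟩ := sub_mem_of_inCell_of_hexDist_lt hrt hc huv
    exact Finset.mem_image.2 ⟨(x' - x, y' - y), Finset.mem_product.2 ⟨hx, hy⟩, by simp⟩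
  have hinj : Function.Injective fun ij : ℤ × ℤ => patternPt t r (x + ij.1) (y + ij.2) :=
    fun ij kl h => by
      rw [patternPt_inj hD.ne'] at h
      exact Prod.ext (by omega) (by omega)
  rw [receptionSet_eq_sum corners hsub hnear, Finset.sum_image hinj.injOn, Finset.sum_product]
  simp only [hdist]
  refine sum_corner_signals_eq ht hrt hc fun i _ j _ => ?_
  rw [← hdist]
  exact hfar _ (patternPt_mem_pattern _ _)

theorem pattern_isEfficientBroadcast (ht : 0 < t) (hrt : r ≤ t) :
    IsEfficientBroadcast (pattern t r) t r := by
  refine ⟨fun u => ?_, fun u => receptionSet_pattern_of_le_hexDist ht hrt,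
    fun u v hv huv => receptionSet_pattern_of_hexDist_lt hrt hv huv⟩
  by_cases hnear : ∃ v ∈ pattern t r, hexDist u v < t - r
  · obtain ⟨v, hv, huv⟩ := hnear
    rw [(receptionSet_pattern_of_hexDist_lt hrt hv huv).1]
    omega
  · simp only [not_exists, not_and, not_lt] at hnear
    rw [receptionSet_pattern_of_le_hexDist ht hrt hnear]

end Pattern

theorem image_swap_pattern (t r : ℕ) : Prod.swap '' pattern t r = patternMirror t r := by
  ext p
  constructor
  · rintro ⟨q, ⟨x, y, rfl⟩, rfl⟩
    exact ⟨x, y, rfl⟩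
  · rintro ⟨x, y, rfl⟩
    exact ⟨_, ⟨x, y, rfl⟩, rfl⟩

/-- Corollary 4.3: the mirror pattern
`[tx + (2t−r)y]α₁ + [(2t−r)x + (t−r)y]α₂` (`x, y ∈ ℤ`) is also an efficient
`(t,r)` broadcast dominating set of `T_∞`; it is the reflection of the pattern
of Theorem 4.2 across the line through the origin and `α₁ + α₂` (which in
lattice coordinates is the swap of the two coordinates). -/
theorem patternMirror_is_efficient (t r : ℕ) (hr : 1 ≤ r) (hrt : r ≤ t) :
    IsEfficientBroadcast (patternMirror t r) t r ∧
    Prod.swap '' pattern t r = patternMirror t r := by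
  refine ⟨?_, image_swap_pattern t r⟩
  rw [← image_swap_pattern]
  exact (pattern_isEfficientBroadcast (by omega) hrt).image (Equiv.prodComm ℤ ℤ) hexDist_swap
end
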